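/- For every y_c ∈ (-1,1), SI_2^{C(y_c)} < 1/2; the map y_c ↦ SI_2^{C(y_c)} = |y_c|/(1+|y_c|) is strictly increasing in |y_c|, and its supremum over y_c ∈ (-1,1) equals 1/2, approached as |y_c| → 1. -/

import Mathlib

open MeasureTheory ProbabilityTheory Set

noncomputable def unifSq : Measure (ℝ × ℝ) :=
  (4 : ENNReal)⁻¹ •
    ((volume.restrict (Icc (-1 : ℝ) 1)).prod (volume.restrict (Icc (-1 : ℝ) 1)))

noncomputable def sgn (x : ℝ) : ℝ := if 0 ≤ x then 1 else -1

noncomputable def Ymod (ω : ℝ × ℝ) : ℝ := sgn ω.1 * |ω.2|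

noncomputable def indC (C : Set ℝ) (ω : ℝ × ℝ) : ℝ := C.indicator 1 (Ymod ω)

noncomputable def SIdx (X : ℝ × ℝ → ℝ) (C : Set ℝ) : ℝ :=
  variance (unifSq[indC C | MeasurableSpace.comap X inferInstance]) unifSq /
    variance (indC C) unifSq

noncomputable def nuI : Measure ℝ := volume.restrict (Icc (-1 : ℝ) 1)

def T1 (yc : ℝ) : Set ℝ := {y | |y| ≤ 1 ∧ -yc ≤ |y|}
def T2 (yc : ℝ) : Set ℝ := {y | |y| ≤ yc}

noncomputable def gfun (yc : ℝ) (ω : ℝ × ℝ) : ℝ :=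
  2⁻¹ * ((T1 yc).indicator 1 ω.2 + (T2 yc).indicator 1 ω.2)

lemma measurable_sgn : Measurable sgn := by
  unfold sgn
  exact Measurable.ite (measurableSet_le measurable_const measurable_id) measurable_const measurable_const

lemma measurable_Ymod : Measurable Ymod :=
  ((measurable_sgn.comp measurable_fst).mul (measurable_snd.abs))

lemma measurableSet_T1 (yc : ℝ) : MeasurableSet (T1 yc) :=
  (measurableSet_le measurable_abs measurable_const).inter
    (measurableSet_le measurable_const measurable_abs)

lemma measurableSet_T2 (yc : ℝ) : MeasurableSet (T2 yc) :=
  measurableSet_le (measurable_abs) measurable_const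

lemma nuI_univ : nuI univ = 2 := by
  simp [nuI, Real.volume_Icc]
  norm_num

instance : IsFiniteMeasure nuI := by
  constructor; rw [nuI_univ]; exact ENNReal.ofNat_lt_top

instance : IsProbabilityMeasure unifSq := by
  constructor
  have : ((volume.restrict (Icc (-1 : ℝ) 1)).prod (volume.restrict (Icc (-1 : ℝ) 1))) univ = 4 := by
    rw [← Set.univ_prod_univ, Measure.prod_prod]
    rw [show volume.restrict (Icc (-1 : ℝ) 1) = nuI from rfl, nuI_univ]
    norm_num
  simp [unifSq, this]
  rw [ENNReal.inv_mul_cancel] <;> norm_num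


lemma unifSq_eq : unifSq = (4 : ENNReal)⁻¹ • (nuI.prod nuI) := rfl

lemma nuI_Ici : nuI (Ici (0:ℝ)) = 1 := by
  rw [nuI, Measure.restrict_apply measurableSet_Ici]
  have h : Ici (0:ℝ) ∩ Icc (-1) 1 = Icc 0 1 := by
    ext x
    simp only [mem_inter_iff, mem_Ici, mem_Icc]
    constructor
    · rintro ⟨h1, _, h3⟩; exact ⟨h1, h3⟩
    · rintro ⟨h1, h2⟩; exact ⟨h1, by linarith, h2⟩
  rw [h, Real.volume_Icc]
  norm_num

lemma nuI_Iio : nuI (Iio (0:ℝ)) = 1 := by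
  rw [nuI, Measure.restrict_apply measurableSet_Iio]
  have h : Iio (0:ℝ) ∩ Icc (-1) 1 = Ico (-1) 0 := by
    ext x
    simp only [mem_inter_iff, mem_Iio, mem_Icc, mem_Ico]
    constructor
    · rintro ⟨h1, h2, _⟩; exact ⟨h2, h1⟩
    · rintro ⟨h1, h2⟩; exact ⟨h2, h1, by linarith⟩
  rw [h, Real.volume_Ico]
  norm_num

lemma nuI_Icc {a b : ℝ} (h : -1 ≤ a) (h2 : b ≤ 1) :
    nuI (Icc a b) = ENNReal.ofReal (b - a) := by
  rw [nuI, Measure.restrict_apply measurableSet_Icc,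
    inter_eq_left.2 (Icc_subset_Icc h h2), Real.volume_Icc]

lemma T2_eq (yc : ℝ) : T2 yc = Icc (-yc) yc := by
  ext y; simp [T2, abs_le]

lemma T2_empty {yc : ℝ} (h : yc < 0) : T2 yc = ∅ := by
  ext y
  simp only [T2, mem_setOf_eq, mem_empty_iff_false, iff_false, not_le]
  exact lt_of_lt_of_le h (abs_nonneg y)

lemma nuI_T2 {yc : ℝ} (h1 : yc ≤ 1) : nuI (T2 yc) = ENNReal.ofReal (2 * yc) := by
  rcases le_or_gt 0 yc with h0 | h0
  · rw [T2_eq, nuI_Icc (by linarith) h1]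
    ring_nf
  · rw [T2_empty h0, measure_empty, Eq.comm, ENNReal.ofReal_eq_zero]
    linarith

lemma T1_eq_of_nonneg {yc : ℝ} (h : 0 ≤ yc) : T1 yc = Icc (-1) 1 := by
  ext y
  simp only [T1, mem_setOf_eq, mem_Icc, abs_le]
  constructor
  · rintro ⟨⟨h1, h2⟩, _⟩; exact ⟨h1, h2⟩
  · rintro ⟨h1, h2⟩
    exact ⟨⟨h1, h2⟩, le_trans (by linarith) (abs_nonneg y)⟩

lemma T1_eq_of_neg {yc : ℝ} (h : yc < 0) : T1 yc = Icc (-1) yc ∪ Icc (-yc) 1 := by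
  ext y
  simp only [T1, mem_setOf_eq, mem_union, mem_Icc, abs_le, le_abs]
  constructor
  · rintro ⟨⟨h1, h2⟩, h3 | h3⟩
    · right; exact ⟨h3, h2⟩
    · left; exact ⟨h1, by linarith⟩
  · rintro (⟨h1, h2⟩ | ⟨h1, h2⟩)
    · exact ⟨⟨h1, by linarith⟩, Or.inr (by linarith)⟩
    · exact ⟨⟨by linarith, h2⟩, Or.inl h1⟩

lemma nuI_T1_nonneg {yc : ℝ} (h : 0 ≤ yc) : nuI (T1 yc) = 2 := by
  rw [T1_eq_of_nonneg h, nuI_Icc le_rfl le_rfl]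
  norm_num

lemma nuI_T1_neg {yc : ℝ} (h : yc < 0) (h1 : -1 < yc) :
    nuI (T1 yc) = ENNReal.ofReal (2 + 2 * yc) := by
  rw [T1_eq_of_neg h]
  have hdis : Disjoint (Icc (-1:ℝ) yc) (Icc (-yc) 1) := by
    rw [Set.disjoint_left]
    rintro y ⟨_, h2⟩ ⟨h3, _⟩
    linarith
  rw [measure_union hdis measurableSet_Icc, nuI_Icc le_rfl (by linarith),
    nuI_Icc (by linarith) le_rfl, ← ENNReal.ofReal_add (by linarith) (by linarith)]
  ring_nf

lemma indC_eq (C : Set ℝ) : indC C = (Ymod ⁻¹' C).indicator (fun _ => (1:ℝ)) := by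
  funext ω
  by_cases h : Ymod ω ∈ C
  · simp [indC, Set.indicator_apply, h]
  · simp [indC, Set.indicator_apply, h]

lemma A_eq (yc : ℝ) :
    Ymod ⁻¹' Icc (-1) yc = (Ici (0:ℝ) ×ˢ T2 yc) ∪ (Iio (0:ℝ) ×ˢ T1 yc) := by
  ext ⟨x, y⟩
  simp only [mem_preimage, Ymod, sgn, mem_Icc, mem_union, mem_prod, mem_Ici, mem_Iio, T1, T2,
    mem_setOf_eq]
  by_cases hx : 0 ≤ x
  · rw [if_pos hx, one_mul]
    constructor
    · rintro ⟨_, h2⟩; exact Or.inl ⟨hx, h2⟩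
    · rintro (⟨_, h⟩ | ⟨h, _⟩)
      · exact ⟨le_trans (by norm_num) (abs_nonneg y), h⟩
      · linarith
  · rw [if_neg hx, neg_one_mul]
    push_neg at hx
    constructor
    · rintro ⟨h1, h2⟩; exact Or.inr ⟨hx, by linarith, by linarith⟩
    · rintro (⟨h, _⟩ | ⟨_, h1, h2⟩)
      · linarith
      · exact ⟨by linarith, by linarith⟩

lemma measurableSet_A (yc : ℝ) : MeasurableSet (Ymod ⁻¹' Icc (-1) yc) :=
  measurable_Ymod measurableSet_Icc

lemma unifSq_A {yc : ℝ} (h : yc ∈ Ioo (-1:ℝ) 1) :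
    (unifSq (Ymod ⁻¹' Icc (-1) yc)).toReal = (1 + yc) / 2 := by
  obtain ⟨hl, hr⟩ := h
  have hdis : Disjoint (Ici (0:ℝ) ×ˢ T2 yc) (Iio (0:ℝ) ×ˢ T1 yc) := by
    rw [Set.disjoint_left]
    rintro ⟨x, y⟩ ⟨hx, _⟩ ⟨hx', _⟩
    exact absurd (show x < 0 from hx') (not_lt.2 hx)
  have hP : (nuI.prod nuI) (Ymod ⁻¹' Icc (-1) yc) = ENNReal.ofReal (2 + 2 * yc) := by
    rw [A_eq, measure_union hdis (measurableSet_Iio.prod (measurableSet_T1 yc)),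
      Measure.prod_prod, Measure.prod_prod, nuI_Ici, nuI_Iio, one_mul, one_mul]
    rcases le_or_gt 0 yc with h0 | h0
    · rw [nuI_T2 hr.le, nuI_T1_nonneg h0,
        ← ENNReal.ofReal_ofNat, ← ENNReal.ofReal_add (by linarith) (by norm_num)]
      ring_nf
    · rw [nuI_T2 hr.le, nuI_T1_neg h0 hl]
      rw [show ENNReal.ofReal (2 * yc) = 0 by rw [ENNReal.ofReal_eq_zero]; linarith]
      rw [zero_add]
  rw [unifSq_eq, Measure.smul_apply, smul_eq_mul, hP, ENNReal.toReal_mul,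
    ENNReal.toReal_ofReal (by linarith), ENNReal.toReal_inv]
  norm_num
  linarith

lemma unifSq_snd (t : Set ℝ) : unifSq (Prod.snd ⁻¹' t) = 4⁻¹ * (2 * nuI t) := by
  rw [unifSq_eq, Measure.smul_apply, smul_eq_mul, ← Set.univ_prod, Measure.prod_prod, nuI_univ]


lemma indC_slice (yc y x : ℝ) :
    indC (Icc (-1) yc) (x, y)
      = if 0 ≤ x then (T2 yc).indicator 1 y else (T1 yc).indicator 1 y := by
  rw [indC_eq]
  by_cases hx : 0 ≤ x
  · rw [if_pos hx]
    by_cases hy : y ∈ T2 yc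
    · have hm : (x, y) ∈ Ymod ⁻¹' Icc (-1) yc := by
        rw [A_eq]; exact Or.inl ⟨hx, hy⟩
      simp [Set.indicator_apply, hm, hy]
    · have hm : (x, y) ∉ Ymod ⁻¹' Icc (-1) yc := by
        rw [A_eq]
        rintro (⟨_, h⟩ | ⟨h, _⟩)
        · exact hy h
        · exact absurd hx (not_le.2 h)
      simp [Set.indicator_apply, hm, hy]
  · rw [if_neg hx]
    push_neg at hx
    by_cases hy : y ∈ T1 yc
    · have hm : (x, y) ∈ Ymod ⁻¹' Icc (-1) yc := by
        rw [A_eq]; exact Or.inr ⟨hx, hy⟩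
      simp [Set.indicator_apply, hm, hy]
    · have hm : (x, y) ∉ Ymod ⁻¹' Icc (-1) yc := by
        rw [A_eq]
        rintro (⟨h, _⟩ | ⟨_, h⟩)
        · exact absurd hx (not_lt.2 h)
        · exact hy h
      simp [Set.indicator_apply, hm, hy]

lemma inner_eq (yc y : ℝ) :
    ∫ x, indC (Icc (-1) yc) (x, y) ∂nuI
      = (T1 yc).indicator 1 y + (T2 yc).indicator 1 y := by
  have hfun : (fun x => indC (Icc (-1) yc) (x, y))
      = fun x => (Ici (0:ℝ)).indicator (fun _ => (T2 yc).indicator 1 y) x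
        + (Iio (0:ℝ)).indicator (fun _ => (T1 yc).indicator 1 y) x := by
    funext x
    rcases le_or_gt 0 x with hx | hx
    · rw [indC_slice, if_pos hx, indicator_of_mem (mem_Ici.2 hx),
        indicator_of_notMem (fun hc => absurd (mem_Iio.1 hc) (not_lt.2 hx)), add_zero]
    · rw [indC_slice, if_neg (not_le.2 hx),
        indicator_of_notMem (fun hc => absurd (mem_Ici.1 hc) (not_le.2 hx)),
        indicator_of_mem (mem_Iio.2 hx), zero_add]
  rw [hfun]
  rw [integral_add ((integrable_const _).indicator measurableSet_Ici)
    ((integrable_const _).indicator measurableSet_Iio)]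
  rw [integral_indicator_const _ measurableSet_Ici, integral_indicator_const _ measurableSet_Iio,
    measureReal_def, measureReal_def, nuI_Ici, nuI_Iio]
  simp [add_comm]

lemma gfun_eq_pre (yc : ℝ) :
    gfun yc = fun ω => 2⁻¹ * ((Prod.snd ⁻¹' T1 yc).indicator 1 ω
      + (Prod.snd ⁻¹' T2 yc).indicator 1 ω) := by
  funext ω
  rw [gfun]
  have h1 : (T1 yc).indicator (1 : ℝ → ℝ) ω.2 = (Prod.snd ⁻¹' T1 yc).indicator 1 ω := by
    by_cases h : ω.2 ∈ T1 yc <;> simp [Set.indicator_apply, h, mem_preimage]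
  have h2 : (T2 yc).indicator (1 : ℝ → ℝ) ω.2 = (Prod.snd ⁻¹' T2 yc).indicator 1 ω := by
    by_cases h : ω.2 ∈ T2 yc <;> simp [Set.indicator_apply, h, mem_preimage]
  rw [h1, h2]

lemma integrable_indC (yc : ℝ) {μ : Measure (ℝ × ℝ)} [IsFiniteMeasure μ] :
    Integrable (indC (Icc (-1) yc)) μ := by
  rw [indC_eq]
  exact (integrable_const 1).indicator (measurableSet_A yc)

lemma integrable_gfun (yc : ℝ) {μ : Measure (ℝ × ℝ)} [IsFiniteMeasure μ] :
    Integrable (gfun yc) μ := by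
  rw [gfun_eq_pre]
  exact (((integrable_const 1).indicator (measurable_snd (measurableSet_T1 yc))).add
    ((integrable_const 1).indicator (measurable_snd (measurableSet_T2 yc)))).const_mul _

lemma gfun_eq_condexp (yc : ℝ) :
    gfun yc =ᵐ[unifSq]
      unifSq[indC (Icc (-1) yc) | MeasurableSpace.comap Prod.snd inferInstance] := by
  have hm : MeasurableSpace.comap Prod.snd inferInstance
      ≤ (inferInstance : MeasurableSpace (ℝ × ℝ)) := measurable_snd.comap_le
  haveI : SigmaFinite (unifSq.trim hm) := by infer_instance
  refine ae_eq_condExp_of_forall_setIntegral_eq hm (integrable_indC yc) ?_ ?_ ?_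
  · exact fun s _ _ => (integrable_gfun yc).integrableOn
  · rintro s ⟨t, ht, rfl⟩ _
    have hPfin : IsFiniteMeasure (nuI.prod (nuI.restrict t)) := by infer_instance
    have key : ∀ (f : ℝ × ℝ → ℝ), Integrable f (nuI.prod (nuI.restrict t)) →
        ∫ ω in Prod.snd ⁻¹' t, f ω ∂unifSq
          = (4:ENNReal)⁻¹.toReal • ∫ y, ∫ x, f (x, y) ∂nuI ∂(nuI.restrict t) := by
      intro f hf
      rw [unifSq_eq, Measure.restrict_smul, integral_smul_measure,
        ← Set.univ_prod, ← Measure.prod_restrict, Measure.restrict_univ,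
        integral_prod_symm _ hf]
    have hres : nuI.prod (nuI.restrict t) = (nuI.prod nuI).restrict (univ ×ˢ t) := by
      rw [← Measure.prod_restrict, Measure.restrict_univ]
    have hgint : Integrable (gfun yc) (nuI.prod (nuI.restrict t)) := by
      rw [hres]; exact (integrable_gfun yc).integrableOn
    have hfint : Integrable (indC (Icc (-1) yc)) (nuI.prod (nuI.restrict t)) := by
      rw [hres]; exact (integrable_indC yc).integrableOn
    rw [key _ hgint, key _ hfint]
    congr 1
    refine integral_congr_ae (Filter.Eventually.of_forall fun y => ?_)
    show ∫ x, gfun yc (x, y) ∂nuI = ∫ x, indC (Icc (-1) yc) (x, y) ∂nuI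
    rw [inner_eq]
    have heq : (fun x => gfun yc (x, y))
        = fun _ : ℝ => 2⁻¹ * ((T1 yc).indicator 1 y + (T2 yc).indicator 1 y) := rfl
    rw [heq, integral_const, measureReal_def, nuI_univ, smul_eq_mul, ENNReal.toReal_ofNat]
    ring
  · refine StronglyMeasurable.aestronglyMeasurable (Measurable.stronglyMeasurable ?_)
    have hH : Measurable (fun y : ℝ =>
        (2:ℝ)⁻¹ * ((T1 yc).indicator 1 y + (T2 yc).indicator 1 y)) :=
      (((measurable_const.indicator (measurableSet_T1 yc)).add
        (measurable_const.indicator (measurableSet_T2 yc))).const_mul ((2:ℝ)⁻¹))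
    exact hH.comp (Measurable.of_comap_le le_rfl)


lemma variance_congr {Ω : Type*} [MeasurableSpace Ω] {μ : Measure Ω} {f g : Ω → ℝ}
    (h : f =ᵐ[μ] g) : variance f μ = variance g μ := by
  have hi : ∫ a, f a ∂μ = ∫ a, g a ∂μ := integral_congr_ae h
  unfold ProbabilityTheory.variance ProbabilityTheory.evariance
  congr 1
  apply lintegral_congr_ae
  filter_upwards [h] with a ha
  rw [ha, hi]

lemma variance_indicator {Ω : Type*} [MeasurableSpace Ω] (μ : Measure Ω)
    [IsProbabilityMeasure μ] {B : Set Ω} (hB : MeasurableSet B) :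
    variance (B.indicator (fun _ => (1:ℝ))) μ = (μ B).toReal - (μ B).toReal ^ 2 := by
  have hmem : MemLp (B.indicator fun _ => (1:ℝ)) 2 μ := (memLp_const 1).indicator hB
  rw [variance_eq_sub hmem]
  have h2 : (B.indicator fun _ => (1:ℝ)) ^ 2 = B.indicator fun _ => (1:ℝ) := by
    funext x; by_cases hx : x ∈ B <;> simp [Set.indicator_apply, hx]
  rw [h2, integral_indicator_const _ hB, measureReal_def]
  simp

lemma variance_const_add {Ω : Type*} [MeasurableSpace Ω] (μ : Measure Ω)
    [IsProbabilityMeasure μ] (c : ℝ) (X : Ω → ℝ) (hX : Integrable X μ) :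
    variance (fun ω => c + X ω) μ = variance X μ := by
  have h : ∫ ω, (c + X ω) ∂μ = c + ∫ ω, X ω ∂μ := by
    rw [integral_add (integrable_const c) hX, integral_const]
    simp
  unfold ProbabilityTheory.variance ProbabilityTheory.evariance
  congr 1
  apply lintegral_congr
  intro ω
  rw [h]
  congr 2
  ring

lemma ae_snd_mem : ∀ᵐ ω ∂unifSq, ω.2 ∈ Icc (-1:ℝ) 1 := by
  rw [ae_iff]
  have h : {ω : ℝ × ℝ | ¬ ω.2 ∈ Icc (-1:ℝ) 1} = Prod.snd ⁻¹' (Icc (-1:ℝ) 1)ᶜ := rfl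
  rw [h, unifSq_snd]
  have : nuI (Icc (-1:ℝ) 1)ᶜ = 0 := by
    rw [nuI, Measure.restrict_apply (measurableSet_Icc.compl), compl_inter_self]
    exact measure_empty
  rw [this]
  simp

lemma var_indC {yc : ℝ} (h : yc ∈ Ioo (-1:ℝ) 1) :
    variance (indC (Icc (-1) yc)) unifSq = (1 + yc) / 2 - ((1 + yc) / 2) ^ 2 := by
  rw [indC_eq, variance_indicator _ (measurableSet_A yc), unifSq_A h]

lemma var_condexp {yc : ℝ} (h : yc ∈ Ioo (-1:ℝ) 1) :
    variance (unifSq[indC (Icc (-1) yc) | MeasurableSpace.comap Prod.snd inferInstance]) unifSq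
      = |yc| * (1 - |yc|) / 4 := by
  rw [← _root_.variance_congr (gfun_eq_condexp yc)]
  obtain ⟨hl, hr⟩ := h
  rcases le_or_gt 0 yc with h0 | h0
  · -- gfun =ᵐ 2⁻¹ + 2⁻¹ * indicator (snd ⁻¹' T2)
    have hae : gfun yc =ᵐ[unifSq]
        fun ω => 2⁻¹ + 2⁻¹ * (Prod.snd ⁻¹' T2 yc).indicator 1 ω := by
      filter_upwards [ae_snd_mem] with ω hω
      rw [gfun_eq_pre]
      have h1 : (Prod.snd ⁻¹' (T1 yc)).indicator (1 : ℝ × ℝ → ℝ) ω = 1 := by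
        apply indicator_of_mem
        rw [mem_preimage, T1_eq_of_nonneg h0]
        exact hω
      simp only [gfun_eq_pre, h1]
      ring
    rw [_root_.variance_congr hae]
    have hint : Integrable
        (fun ω : ℝ × ℝ => (2:ℝ)⁻¹ * (Prod.snd ⁻¹' T2 yc).indicator 1 ω) unifSq := by
      exact ((integrable_const (1:ℝ)).indicator
        (measurable_snd (measurableSet_T2 yc))).const_mul _
    rw [show variance (fun ω => (2:ℝ)⁻¹ + (2:ℝ)⁻¹ * (Prod.snd ⁻¹' T2 yc).indicator 1 ω) unifSq
        = variance (fun ω : ℝ × ℝ => (2:ℝ)⁻¹ * (Prod.snd ⁻¹' T2 yc).indicator 1 ω) unifSq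
        from variance_const_add unifSq _ _ hint]
    rw [variance_const_mul]
    have hq : (unifSq (Prod.snd ⁻¹' T2 yc)).toReal = yc := by
      rw [unifSq_snd, nuI_T2 hr.le, ENNReal.toReal_mul, ENNReal.toReal_mul,
        ENNReal.toReal_inv, ENNReal.toReal_ofNat, ENNReal.toReal_ofNat,
        ENNReal.toReal_ofReal (by linarith)]
      ring
    rw [show ((Prod.snd ⁻¹' T2 yc).indicator (1 : ℝ × ℝ → ℝ))
        = ((Prod.snd ⁻¹' T2 yc).indicator (fun _ => (1:ℝ))) from rfl,
      variance_indicator _ (measurable_snd (measurableSet_T2 yc)), hq, abs_of_nonneg h0]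
    ring
  · -- yc < 0 : gfun = 2⁻¹ * indicator (snd ⁻¹' T1)
    have heq : gfun yc = fun ω => 2⁻¹ * (Prod.snd ⁻¹' T1 yc).indicator 1 ω := by
      rw [gfun_eq_pre]
      funext ω
      rw [T2_empty h0]
      simp
    rw [heq, variance_const_mul]
    have hq : (unifSq (Prod.snd ⁻¹' T1 yc)).toReal = 1 + yc := by
      rw [unifSq_snd, nuI_T1_neg h0 hl, ENNReal.toReal_mul, ENNReal.toReal_mul,
        ENNReal.toReal_inv, ENNReal.toReal_ofNat, ENNReal.toReal_ofNat,
        ENNReal.toReal_ofReal (by linarith)]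
      ring
    rw [show ((Prod.snd ⁻¹' T1 yc).indicator (1 : ℝ × ℝ → ℝ))
        = ((Prod.snd ⁻¹' T1 yc).indicator (fun _ => (1:ℝ))) from rfl,
      variance_indicator _ (measurable_snd (measurableSet_T1 yc)), hq, abs_of_neg h0]
    ring

lemma SIdx_eq {yc : ℝ} (h : yc ∈ Ioo (-1:ℝ) 1) :
    SIdx Prod.snd (Icc (-1) yc) = |yc| / (1 + |yc|) := by
  obtain ⟨hl, hr⟩ := h
  have ha : |yc| < 1 := abs_lt.2 ⟨hl, hr⟩
  have ha0 : 0 ≤ |yc| := abs_nonneg yc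
  rw [SIdx, var_condexp ⟨hl, hr⟩, var_indC ⟨hl, hr⟩]
  have hden : (1 + yc) / 2 - ((1 + yc) / 2) ^ 2 = (1 - |yc|) * (1 + |yc|) / 4 := by
    have := sq_abs yc
    nlinarith [sq_abs yc]
  rw [hden]
  have h1ne : (1 : ℝ) - |yc| ≠ 0 := by linarith
  have h2ne : (1 : ℝ) + |yc| ≠ 0 := by linarith
  field_simp

theorem stmt7 :
    (∀ yc ∈ Ioo (-1 : ℝ) 1, SIdx Prod.snd (Icc (-1 : ℝ) yc) < 1 / 2) ∧
    (∀ yc ∈ Ioo (-1 : ℝ) 1, SIdx Prod.snd (Icc (-1 : ℝ) yc) = |yc| / (1 + |yc|)) ∧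
    (∀ y ∈ Ioo (-1 : ℝ) 1, ∀ y' ∈ Ioo (-1 : ℝ) 1, |y| < |y'| →
      SIdx Prod.snd (Icc (-1 : ℝ) y) < SIdx Prod.snd (Icc (-1 : ℝ) y')) ∧
    sSup ((fun yc => SIdx Prod.snd (Icc (-1 : ℝ) yc)) '' Ioo (-1 : ℝ) 1) = 1 / 2 ∧
    Filter.Tendsto (fun yc => SIdx Prod.snd (Icc (-1 : ℝ) yc))
      (nhdsWithin 1 (Iio (1 : ℝ))) (nhds (1 / 2)) ∧
    Filter.Tendsto (fun yc => SIdx Prod.snd (Icc (-1 : ℝ) yc))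
      (nhdsWithin (-1) (Ioi (-1 : ℝ))) (nhds (1 / 2)) := by
  have key : ∀ yc ∈ Ioo (-1 : ℝ) 1, SIdx Prod.snd (Icc (-1 : ℝ) yc) = |yc| / (1 + |yc|) :=
    fun yc h => SIdx_eq h
  have p1 : ∀ yc ∈ Ioo (-1 : ℝ) 1, SIdx Prod.snd (Icc (-1 : ℝ) yc) < 1 / 2 := by
    intro yc h
    rw [key yc h, div_lt_div_iff₀ (by positivity) (by norm_num)]
    have := abs_lt.2 ⟨h.1, h.2⟩
    linarith
  have tend1 : Filter.Tendsto (fun yc => SIdx Prod.snd (Icc (-1 : ℝ) yc))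
      (nhdsWithin 1 (Iio (1 : ℝ))) (nhds (1 / 2)) := by
    have hmem : Ioo (0:ℝ) 1 ∈ nhdsWithin (1:ℝ) (Iio (1:ℝ)) :=
      Ioo_mem_nhdsLT_of_mem (show (1:ℝ) ∈ Ioc (0:ℝ) 1 by constructor <;> norm_num)
    have hev : ∀ᶠ yc in nhdsWithin (1:ℝ) (Iio (1:ℝ)),
        SIdx Prod.snd (Icc (-1 : ℝ) yc) = yc / (1 + yc) := by
      filter_upwards [hmem] with yc hyc
      rw [key yc ⟨by linarith [hyc.1], hyc.2⟩, abs_of_pos hyc.1]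
    refine Filter.Tendsto.congr' (hev.mono fun _ hx => hx.symm) ?_
    have hc : ContinuousAt (fun yc : ℝ => yc / (1 + yc)) 1 :=
      continuousAt_id.div (continuousAt_const.add continuousAt_id) (by norm_num)
    have ht : Filter.Tendsto (fun yc : ℝ => yc / (1 + yc)) (nhds 1) (nhds (1 / 2)) := by
      have := hc.tendsto
      norm_num at this
      exact this
    exact ht.mono_left nhdsWithin_le_nhds
  have tend2 : Filter.Tendsto (fun yc => SIdx Prod.snd (Icc (-1 : ℝ) yc))
      (nhdsWithin (-1) (Ioi (-1 : ℝ))) (nhds (1 / 2)) := by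
    have hmem : Ioo (-1:ℝ) 0 ∈ nhdsWithin (-1:ℝ) (Ioi (-1:ℝ)) :=
      Ioo_mem_nhdsGT_of_mem (show (-1:ℝ) ∈ Ico (-1:ℝ) 0 by constructor <;> norm_num)
    have hev : ∀ᶠ yc in nhdsWithin (-1:ℝ) (Ioi (-1:ℝ)),
        SIdx Prod.snd (Icc (-1 : ℝ) yc) = -yc / (1 - yc) := by
      filter_upwards [hmem] with yc hyc
      rw [key yc ⟨hyc.1, by linarith [hyc.2]⟩, abs_of_neg hyc.2]
      ring_nf
    refine Filter.Tendsto.congr' (hev.mono fun _ hx => hx.symm) ?_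
    have hc : ContinuousAt (fun yc : ℝ => -yc / (1 - yc)) (-1) :=
      continuousAt_id.neg.div (continuousAt_const.sub continuousAt_id) (by norm_num)
    have ht : Filter.Tendsto (fun yc : ℝ => -yc / (1 - yc)) (nhds (-1)) (nhds (1 / 2)) := by
      have := hc.tendsto
      norm_num at this
      exact this
    exact ht.mono_left nhdsWithin_le_nhds
  have hbdd : ∀ z ∈ (fun yc => SIdx Prod.snd (Icc (-1 : ℝ) yc)) '' Ioo (-1 : ℝ) 1,
      z ≤ 1 / 2 := by
    rintro z ⟨yc, hyc, rfl⟩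
    exact (p1 yc hyc).le
  refine ⟨p1, key, ?_, ?_, tend1, tend2⟩
  · intro y hy y' hy' hlt
    rw [key y hy, key y' hy']
    have hb : |y'| < 1 := abs_lt.2 ⟨hy'.1, hy'.2⟩
    have ha : (0:ℝ) ≤ |y| := abs_nonneg y
    rw [div_lt_div_iff₀ (by positivity) (by positivity)]
    nlinarith
  · apply le_antisymm
    · exact csSup_le
        ⟨_, mem_image_of_mem _ (show (0:ℝ) ∈ Ioo (-1:ℝ) 1 by constructor <;> norm_num)⟩ hbdd
    · refine le_of_tendsto tend1 ?_
      filter_upwards [Ioo_mem_nhdsLT_of_mem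
        (show (1:ℝ) ∈ Ioc (0:ℝ) 1 by constructor <;> norm_num)] with yc hyc
      exact le_csSup ⟨1 / 2, hbdd⟩
        (mem_image_of_mem _ (show yc ∈ Ioo (-1:ℝ) 1 from ⟨by linarith [hyc.1], hyc.2⟩))
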